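/- Let F be a finite field of characteristic 2 with |F| ≥ 4, and let t be a non-identity affine transformation of V = F² of the form t(v) = A·v + c with A ∈ SL(2,F) and c ∈ F². If the order of t (as a permutation of V) is odd, then t fixes exactly one point of V. -/

import Mathlib

/-!
With `det A = 1` in characteristic 2, `det (A - 1) = 2 - tr A = tr A`. If `tr A ≠ 0`, then
`A - 1` is invertible and `t v = v ↔ (A - 1) v = -c` has exactly one solution. If `tr A = 0`,
Cayley–Hamilton gives `A² = 1`, so `t²` is the translation by `A c + c` and `t⁴ = id`; as the
order of `t` is odd and coprime to `4`, this forces `t = id`.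
-/

open Matrix Function Polynomial

theorem Function.eq_id_of_iterate_eq_id_of_coprime {α : Type*} {f : α → α} {m n : ℕ}
    (hm : f^[m] = id) (hn : f^[n] = id) (hmn : m.Coprime n) : f = id := by
  funext x
  have hx : IsPeriodicPt f (m.gcd n) x := IsPeriodicPt.gcd (congrFun hm x) (congrFun hn x)
  rwa [hmn.gcd_eq_one, IsPeriodicPt, IsFixedPt, iterate_one] at hx

namespace Matrix

variable {R : Type*} [CommRing R]

theorem det_sub_one_fin_two (A : Matrix (Fin 2) (Fin 2) R) :
    (A - 1).det = A.det - A.trace + 1 := by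
  simp only [det_fin_two, trace_fin_two, sub_apply, one_apply_eq, one_apply_ne zero_ne_one,
    one_apply_ne one_ne_zero]
  ring

theorem mul_self_eq_trace_smul_sub_det_smul [Nontrivial R] (A : Matrix (Fin 2) (Fin 2) R) :
    A * A = A.trace • A - A.det • 1 := by
  have hCH := A.aeval_self_charpoly
  rw [charpoly_fin_two] at hCH
  simp only [sq, map_add, map_sub, map_mul, aeval_X, aeval_C, Algebra.algebraMap_eq_smul_one,
    smul_one_mul] at hCH
  rw [← sub_eq_zero, ← hCH]
  abel

theorem mul_self_eq_one_of_det_eq_one_of_trace_eq_zero [CharP R 2]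
    {A : Matrix (Fin 2) (Fin 2) R} (hdet : A.det = 1) (htr : A.trace = 0) : A * A = 1 := by
  nontriviality R
  rw [mul_self_eq_trace_smul_sub_det_smul, hdet, htr, zero_smul, one_smul, zero_sub,
    CharTwo.neg_eq]

variable {ι : Type*} [Fintype ι] [DecidableEq ι]

theorem iterate_four_mulVec_add_eq_id [CharP R 2] {A : Matrix ι ι R} (hA : A * A = 1)
    (c : ι → R) : (fun v => A *ᵥ v + c)^[4] = id := by
  have h2 : ∀ v, (fun v => A *ᵥ v + c)^[2] v = v + (A *ᵥ c + c) := by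
    intro v
    show A *ᵥ (A *ᵥ v + c) + c = _
    rw [mulVec_add, mulVec_mulVec, hA, one_mulVec, add_assoc]
  have hd : A *ᵥ c + c + (A *ᵥ c + c) = 0 := funext fun i => CharTwo.add_self_eq_zero _
  funext v
  rw [show 4 = 2 + 2 from rfl, iterate_add_apply, h2, h2, add_assoc, hd, add_zero, id]

theorem card_fixedPoints_mulVec_add_eq_one {A : Matrix ι ι R} (hA : IsUnit (A - 1).det)
    (c : ι → R) : Nat.card {v | A *ᵥ v + c = v} = 1 := by
  have key : ∀ v, A *ᵥ v + c = v ↔ v = (A - 1)⁻¹ *ᵥ -c := fun v =>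
    calc A *ᵥ v + c = v ↔ (A - 1) *ᵥ v = -c := by
          rw [sub_mulVec, one_mulVec, eq_neg_iff_add_eq_zero, sub_add_eq_add_sub, sub_eq_zero]
      _ ↔ v = (A - 1)⁻¹ *ᵥ -c :=
          ⟨fun h => by rw [← h, mulVec_mulVec, nonsing_inv_mul _ hA, one_mulVec],
           fun h => by rw [h, mulVec_mulVec, mul_nonsing_inv _ hA, one_mulVec]⟩
  rw [Nat.card_eq_one_iff_exists]
  exact ⟨⟨_, (key _).2 rfl⟩, fun ⟨v, hv⟩ => Subtype.ext ((key v).1 hv)⟩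

end Matrix

theorem twisted_stmt17_general {F : Type*} [Field F] [CharP F 2]
    (A : Matrix (Fin 2) (Fin 2) F) (hA : A.det = 1) (c : Fin 2 → F)
    (hne : (fun v : Fin 2 → F => A.mulVec v + c) ≠ id)
    (n : ℕ)
    (hiter : (fun v : Fin 2 → F => A.mulVec v + c)^[n] = id)
    (hodd : Odd n) :
    Nat.card {v : Fin 2 → F | A.mulVec v + c = v} = 1 := by
  have hdet : (A - 1).det = A.trace := by
    rw [det_sub_one_fin_two, hA]
    linear_combination (1 - A.trace) * CharTwo.two_eq_zero (R := F)
  refine card_fixedPoints_mulVec_add_eq_one (hdet ▸ isUnit_iff_ne_zero.mpr fun htr => hne ?_) c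
  exact eq_id_of_iterate_eq_id_of_coprime
    (iterate_four_mulVec_add_eq_id (mul_self_eq_one_of_det_eq_one_of_trace_eq_zero hA htr) c)
    hiter ((Nat.coprime_two_left.mpr hodd).pow_left 2)

/-- Let `F` be a finite field of characteristic 2 with `|F| ≥ 4`, and let
`t(v) = A·v + c` with `A ∈ SL(2,F)`, `c ∈ F²`, and `t` not the identity. If the order of
`t` as a permutation of `V = F²` (the least `n ≥ 1` with `t^[n] = id`) is odd, then `t`
fixes exactly one point of `V`. -/
theorem twisted_stmt17 {F : Type*} [Field F] [Fintype F] [CharP F 2]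
    (hcard : 4 ≤ Fintype.card F)
    (A : Matrix (Fin 2) (Fin 2) F) (hA : A.det = 1) (c : Fin 2 → F)
    (hne : (fun v : Fin 2 → F => A.mulVec v + c) ≠ id)
    (n : ℕ) (hn : 0 < n)
    (hiter : (fun v : Fin 2 → F => A.mulVec v + c)^[n] = id)
    (hleast : ∀ m : ℕ, 0 < m → m < n →
      (fun v : Fin 2 → F => A.mulVec v + c)^[m] ≠ id)
    (hodd : Odd n) :
    Nat.card {v : Fin 2 → F | A.mulVec v + c = v} = 1 :=
  twisted_stmt17_general A hA c hne n hiter hodd
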